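/- Let λ > 0 and r ∈ ℝ satisfy |r| > t_{2/3,λ} = (48^{1/4}/3)·λ^{3/4}. Then f_{2/3,λ}(r) is a global minimizer over β ∈ ℝ of the function β ↦ (β − r)² + λ|β|^{2/3}; that is, for every β ∈ ℝ, (f_{2/3,λ}(r) − r)² + λ|f_{2/3,λ}(r)|^{2/3} ≤ (β − r)² + λ|β|^{2/3}. -/
import Mathlib

set_option maxHeartbeats 1000000

/-- `arccosh x = log (x + √(x² − 1))`. -/
noncomputable def arccosh (x : ℝ) : ℝ := Real.log (x + Real.sqrt (x ^ 2 - 1))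

/-- The auxiliary function `Φ_{2/3,λ}`. -/
noncomputable def phi23 (lam r : ℝ) : ℝ :=
  2 / Real.sqrt 3 * lam ^ ((1 : ℝ) / 4) *
    (Real.cosh ((1 / 3) * arccosh ((27 / 16) * lam ^ (-(3 : ℝ) / 2) * r ^ 2))) ^ ((1 : ℝ) / 2)

/-- The two-thirds thresholding function `f_{2/3,λ}`. -/
noncomputable def f23 (lam r : ℝ) : ℝ :=
  (1 / 8) *
    (|phi23 lam r| +
      Real.sqrt (2 * |r| / |phi23 lam r| - (phi23 lam r) ^ 2)) ^ 3 * Real.sign r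

/-- The threshold value `t_{2/3,λ} = (48^{1/4}/3)·λ^{3/4}`. -/
noncomputable def t23 (lam : ℝ) : ℝ :=
  (48 : ℝ) ^ ((1 : ℝ) / 4) / 3 * lam ^ ((3 : ℝ) / 4)

lemma cosh_arccosh {x : ℝ} (hx : 1 ≤ x) : Real.cosh (arccosh x) = x := by
  have h1 : (0:ℝ) ≤ x ^ 2 - 1 := by nlinarith
  have hs : Real.sqrt (x ^ 2 - 1) ^ 2 = x ^ 2 - 1 := Real.sq_sqrt h1
  have hs0 : 0 ≤ Real.sqrt (x ^ 2 - 1) := Real.sqrt_nonneg _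
  have hpos : 0 < x + Real.sqrt (x ^ 2 - 1) := by linarith
  rw [arccosh, Real.cosh_eq, Real.exp_neg, Real.exp_log hpos]
  rw [div_eq_iff (by norm_num : (2:ℝ) ≠ 0)]
  field_simp
  nlinarith [hs]

lemma rpow_quarter_sq {a : ℝ} (ha : 0 ≤ a) : (a ^ ((1:ℝ)/4))^2 = Real.sqrt a := by
  rw [Real.sqrt_eq_rpow, ← Real.rpow_natCast (a ^ ((1:ℝ)/4)) 2, ← Real.rpow_mul ha]
  norm_num

lemma rpow_half_sq {a : ℝ} (ha : 0 ≤ a) : (a ^ ((1:ℝ)/2))^2 = a := by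
  rw [← Real.rpow_natCast (a ^ ((1:ℝ)/2)) 2, ← Real.rpow_mul ha]
  norm_num

lemma rpow_threequarter_sq {a : ℝ} (ha : 0 ≤ a) : (a ^ ((3:ℝ)/4))^2 = a * Real.sqrt a := by
  rw [Real.sqrt_eq_rpow, ← Real.rpow_natCast (a ^ ((3:ℝ)/4)) 2, ← Real.rpow_mul ha]
  rw [show ((3:ℝ)/4 * (2:ℕ)) = 1 + 1/2 by norm_num, Real.rpow_add' ha (by norm_num),
    Real.rpow_one]

lemma cube_rpow_twothirds {u : ℝ} (hu : 0 ≤ u) : (u^3) ^ ((2:ℝ)/3) = u^2 := by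
  rw [← Real.rpow_natCast u 3, ← Real.rpow_mul hu]
  norm_num


lemma stepA_c (c : ℝ) (hc : 1 ≤ c) (hP : 27 ≤ 16*c^2*(4*c^2-3)^2) :
    9*c^5 ≤ (4*c^3-3*c)^3 + 9/4*c^2*(4*c^3-3*c) + 3*c*(4*c^3-3*c)^2 := by
  have hc0 : (0:ℝ) ≤ c := by linarith
  have hkey : (4*c^3-3*c)^3 + 9/4*c^2*(4*c^3-3*c) + 3*c*(4*c^3-3*c)^2 - 9*c^5
      = c^3/4 * (16*c^2*(4*c^2-3)^2 - 27) := by ring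
  have h2 : 0 ≤ c^3 * (16*c^2*(4*c^2-3)^2 - 27) :=
    mul_nonneg (pow_nonneg hc0 3) (by linarith)
  linarith

lemma core1 (lam r φ S c : ℝ) (hlam : 0 < lam) (hr0 : 0 < r) (hφpos : 0 < φ)
    (hS : 0 < S) (hS2 : S^2 = lam) (hc1 : 1 ≤ c)
    (hφsq : φ^2 = 4/3*S*c) (hr2 : r^2 = 16/27*(lam*S)*(4*c^3-3*c))
    (hxc : c < 4*c^3-3*c) :
    0 < 2*r/φ - φ^2 := by
  have hc0 : (0:ℝ) < c := by linarith
  have hφ3pos : (0:ℝ) < φ^3 := pow_pos hφpos 3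
  have h1 : (φ^3)^2 < (2*r)^2 := by
    have e1 : (φ^3)^2 = (φ^2)^3 := by ring
    rw [e1, hφsq]
    have e2 : (2*r)^2 = 4 * (16/27*(lam*S)*(4*c^3-3*c)) := by rw [← hr2]; ring
    rw [e2, ← hS2]
    have hc2 : 1 < c^2 := by nlinarith [hxc, hc0, mul_pos hc0 hc0]
    nlinarith [mul_pos (pow_pos hS 3) (mul_pos hc0 (by linarith : (0:ℝ) < c^2 - 1))]
  have h2 : φ^3 < 2*r := by nlinarith [hφ3pos, hr0]
  have : 2*r/φ - φ^2 = (2*r - φ^3)/φ := by field_simp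
  rw [this]
  exact div_pos (by linarith) hφpos

lemma core2 (lam r φ S c d : ℝ) (hlam : 0 < lam) (hr0 : 0 < r) (hφpos : 0 < φ)
    (hS : 0 < S) (hS2 : S^2 = lam) (hc1 : 1 ≤ c)
    (hφsq : φ^2 = 4/3*S*c) (hr2 : r^2 = 16/27*(lam*S)*(4*c^3-3*c))
    (hP : 27 ≤ 16*c^2*(4*c^2-3)^2)
    (hd0 : 0 ≤ d) (hd2 : d^2 = 2*r/φ - φ^2) :
    3*((φ+d)/2)^4 - 3*r*((φ+d)/2) + lam = 0 ∧ r ≤ 2*((φ+d)/2)^3 := by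
  have hc0 : (0:ℝ) < c := by linarith
  have hφ3pos : (0:ℝ) < φ^3 := pow_pos hφpos 3
  -- the sextic identity
  have hφ6 : φ^6 = 4*lam/3*φ^2 + r^2 := by
    have h1 : φ^6 = (φ^2)^3 := by ring
    rw [h1, hφsq, hr2, ← hS2]
    ring
  have hφ3r : r < φ^3 := by
    have hq : (0:ℝ) < 4*lam/3*φ^2 := by positivity
    nlinarith [hφ6, hq, hφ3pos, hr0]
  have hphid : φ * d^2 = 2*r - φ^3 := by
    rw [hd2]
    field_simp
  have heq2 : 2*φ*((φ+d)/2)^2 - 2*φ^2*((φ+d)/2) + φ^3 - r = 0 := by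
    linear_combination (1/2) * hphid
  constructor
  · have hAB : 3*φ^6 - 4*lam*φ^2 - 3*r^2 = 0 := by linear_combination 3 * hφ6
    have h4' : 4*φ^2*(3*((φ+d)/2)^4 - 3*r*((φ+d)/2) + lam) = 0 := by
      linear_combination (3*(2*φ*((φ+d)/2)^2 + 2*φ^2*((φ+d)/2) + φ^3 + r)) * heq2 - hAB
    rcases mul_eq_zero.mp h4' with h | h
    · exact absurd h (by positivity)
    · exact h
  · -- step A
    have EA : 16*lam^2/9*(φ^2)^5 ≤ 4*(r^2)^3 + 16*lam^2/9*(r^2)*(φ^2)^2 + 16*lam/3*(r^2)^2*(φ^2) := by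
      rw [hφsq, hr2, ← hS2]
      have hA := stepA_c c hc1 hP
      have h9 : (0:ℝ) ≤ S^9 := by positivity
      have h := mul_le_mul_of_nonneg_left hA h9
      have e3 : 16*(S^2)^2/9*(4/3*S*c)^5 = 16384/19683 * (S^9*(9*c^5)) := by ring
      have e4 : 4*(16/27*(S^2*S)*(4*c^3-3*c))^3
            + 16*(S^2)^2/9*(16/27*(S^2*S)*(4*c^3-3*c))*((4/3*S*c))^2
            + 16*(S^2)/3*(16/27*(S^2*S)*(4*c^3-3*c))^2*((4/3*S*c))
          = 16384/19683 * (S^9*((4*c^3-3*c)^3 + 9/4*c^2*(4*c^3-3*c) + 3*c*(4*c^3-3*c)^2)) := by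
        ring
      calc 16*(S^2)^2/9*(4/3*S*c)^5 = 16384/19683 * (S^9*(9*c^5)) := e3
        _ ≤ 16384/19683 * (S^9*((4*c^3-3*c)^3 + 9/4*c^2*(4*c^3-3*c) + 3*c*(4*c^3-3*c)^2)) := by
            linarith
        _ = _ := e4.symm
    -- step B
    have hB : 4*lam/3*φ^5 ≤ 2*r^3 + 4*lam/3*(r*φ^2) := by
      have ha : (0:ℝ) ≤ 4*lam/3*φ^5 := by positivity
      have hb : (0:ℝ) < 2*r^3 + 4*lam/3*(r*φ^2) := by positivity
      have hab2 : (4*lam/3*φ^5)^2 ≤ (2*r^3 + 4*lam/3*(r*φ^2))^2 := by nlinarith [EA]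
      nlinarith [hab2, ha, hb]
    -- step CD
    have k1 : r*φ^6 = 4*lam/3*(r*φ^2) + r^3 := by linear_combination r * hφ6
    have k2 : φ^9 = 4*lam/3*φ^5 + r^2*φ^3 := by linear_combination φ^3 * hφ6
    have key : φ^3*(φ^3-r)^2 ≤ (2*r-φ^3)*(φ^3+r)^2 := by nlinarith [hB, k1, k2]
    -- step E
    have hyr : (0:ℝ) < φ^3 + r := by positivity
    have hd'le : φ*(φ^3-r)/(φ^3+r) ≤ d := by
      have hd'0 : (0:ℝ) ≤ φ*(φ^3-r)/(φ^3+r) := div_nonneg (mul_nonneg hφpos.le (by linarith)) (by positivity)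
      have hsq : (φ*(φ^3-r)/(φ^3+r))^2 ≤ d^2 := by
        rw [hd2, div_pow, div_le_iff₀ (by positivity : (0:ℝ) < (φ^3+r)^2)]
        have h7 : φ * ((2 * r / φ - φ ^ 2) * (φ^3+r)^2) = (2*r-φ^3)*(φ^3+r)^2 := by
          field_simp
        have h6 : φ * ((φ*(φ^3-r))^2) ≤ φ * ((2 * r / φ - φ ^ 2) * (φ^3+r)^2) := by
          rw [h7]
          nlinarith [key]
        exact le_of_mul_le_mul_left h6 hφpos
      nlinarith [hsq, hd'0, hd0]
    -- step F
    have h1 : (φ^3+r) * (φ*(φ^3-r)/(φ^3+r)) = φ*(φ^3-r) := by field_simp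
    have h2 : (φ^3+r) * (φ*(φ^3-r)/(φ^3+r)) ≤ (φ^3+r) * d :=
      mul_le_mul_of_nonneg_left hd'le hyr.le
    have hF : φ^4 ≤ (φ^3+r) * ((φ+d)/2) := by nlinarith [h1, h2]
    -- step G
    have hid : φ*(2*((φ+d)/2)^3 - r) = (φ^3+r)*((φ+d)/2) - φ^4 := by
      linear_combination (((φ+d)/2) + φ) * heq2
    by_contra hcon
    push_neg at hcon
    have hneg : φ*(2*((φ+d)/2)^3 - r) < 0 := mul_neg_of_pos_of_neg hφpos (by linarith)
    rw [hid] at hneg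
    linarith

lemma exists_u (lam r : ℝ) (hlam : 0 < lam) (hr0 : 0 < r) (hrt : t23 lam < r) :
    ∃ u : ℝ, 0 < u ∧ f23 lam r = u ^ 3 ∧ 3*u^4 - 3*r*u + lam = 0 ∧ r ≤ 2*u^3 := by
  set S := Real.sqrt lam with hSdef
  have hS : 0 < S := Real.sqrt_pos.mpr hlam
  have hS2 : S^2 = lam := Real.sq_sqrt hlam.le
  have hlS : 0 < lam * S := by positivity
  have ht2 : (t23 lam)^2 = Real.sqrt 48 / 9 * (lam * S) := by
    rw [t23, mul_pow, div_pow, rpow_quarter_sq (by norm_num : (0:ℝ) ≤ (48:ℝ)),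
      rpow_threequarter_sq hlam.le, ← hSdef]
    ring
  have hr2t : Real.sqrt 48 / 9 * (lam * S) < r^2 := by
    rw [← ht2]
    have ht0 : 0 ≤ t23 lam := by
      rw [t23]; positivity
    exact pow_lt_pow_left₀ hrt ht0 two_ne_zero
  have h48 : (6:ℝ) ≤ Real.sqrt 48 :=
    (Real.le_sqrt (by norm_num) (by norm_num)).mpr (by norm_num)
  have h48sq : Real.sqrt 48 ^ 2 = 48 := Real.sq_sqrt (by norm_num)
  have hlam32 : lam ^ (-(3:ℝ)/2) = (lam * S)⁻¹ := by
    rw [show (-(3:ℝ)/2) = -(3/2) by norm_num, Real.rpow_neg hlam.le,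
      show ((3:ℝ)/2) = 1 + 1/2 by norm_num, Real.rpow_add hlam, Real.rpow_one,
      ← Real.sqrt_eq_rpow, ← hSdef]
  set x := 27 / 16 * lam ^ (-(3 : ℝ) / 2) * r ^ 2 with hxdef
  have hxeq : x = 27 / 16 * (lam * S)⁻¹ * r^2 := by rw [hxdef, hlam32]
  have hx48 : 3 / 16 * Real.sqrt 48 < x := by
    have h := mul_lt_mul_of_pos_left hr2t (by positivity : (0:ℝ) < 27/16 * (lam*S)⁻¹)
    have e : 27/16 * (lam*S)⁻¹ * (Real.sqrt 48 / 9 * (lam * S)) = 3/16 * Real.sqrt 48 := by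
      field_simp
      ring
    rw [e] at h
    rw [hxeq]
    linarith [h]
  have hx1 : 1 < x := by linarith
  have hx2 : 27 / 16 < x^2 := by nlinarith [Real.sqrt_nonneg 48]
  set c := Real.cosh (1 / 3 * arccosh x) with hcdef
  have hc1 : 1 ≤ c := Real.one_le_cosh _
  have hcx : 4*c^3 - 3*c = x := by
    have h3 := Real.cosh_three_mul (1/3 * arccosh x)
    rw [show (3:ℝ) * (1/3 * arccosh x) = arccosh x by ring, cosh_arccosh hx1.le] at h3
    rw [hcdef, ← h3]
  clear_value x
  have hc0 : (0:ℝ) < c := by linarith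
  clear_value c
  have hcgt : 1 < c := by nlinarith [sq_nonneg (2*c+1), hcx, hx1, hc1]
  have hxc' : c < x := by
    nlinarith [mul_pos hc0 (show (0:ℝ) < c^2 - 1 by nlinarith), hcx]
  have hP : 27 ≤ 16*c^2*(4*c^2-3)^2 := by
    have hxsq : x^2 = c^2*(4*c^2-3)^2 := by rw [← hcx]; ring
    linarith
  set φ := phi23 lam r with hphidef
  have hφdef : φ = 2 / Real.sqrt 3 * lam ^ ((1:ℝ)/4) * c ^ ((1:ℝ)/2) := by
    rw [hphidef, phi23, hcdef, hxdef]
  have hφpos : 0 < φ := by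
    rw [hφdef]
    have h3 : (0:ℝ) < Real.sqrt 3 := Real.sqrt_pos.mpr (by norm_num)
    positivity
  have hφsq : φ^2 = 4/3 * S * c := by
    rw [hφdef, mul_pow, mul_pow, div_pow, Real.sq_sqrt (by norm_num : (0:ℝ) ≤ 3),
      rpow_quarter_sq hlam.le, rpow_half_sq hc0.le, ← hSdef]
    ring
  have hr2 : r^2 = 16/27 * (lam * S) * x := by
    rw [hxeq]
    field_simp
  have hr2' : r^2 = 16/27 * (lam * S) * (4*c^3 - 3*c) := by rw [hcx]; exact hr2
  have hxc : c < 4*c^3 - 3*c := by rw [hcx]; exact hxc'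
  clear_value φ S
  have hDpos := core1 lam r φ S c hlam hr0 hφpos hS hS2 hc1 hφsq hr2' hxc
  set d := Real.sqrt (2 * r / φ - φ ^ 2) with hddef
  have hd0 : 0 ≤ d := Real.sqrt_nonneg _
  have hd2 : d^2 = 2 * r / φ - φ ^ 2 := Real.sq_sqrt hDpos.le
  clear_value d
  obtain ⟨h4, h2u⟩ := core2 lam r φ S c d hlam hr0 hφpos hS hS2 hc1 hφsq hr2' hP hd0 hd2
  refine ⟨(φ + d)/2, by linarith, ?_, h4, h2u⟩
  rw [f23, ← hphidef, Real.sign_of_pos hr0, abs_of_pos hφpos, abs_of_pos hr0, mul_one,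
    ← hddef]
  ring

lemma min_pos (lam r : ℝ) (hlam : 0 < lam) (hr0 : 0 < r) (hrt : t23 lam < r) :
    ∀ β : ℝ,
      (f23 lam r - r) ^ 2 + lam * |f23 lam r| ^ ((2 : ℝ) / 3) ≤
        (β - r) ^ 2 + lam * |β| ^ ((2 : ℝ) / 3) := by
  obtain ⟨u, hu, hfu, hq, h2u⟩ := exists_u lam r hlam hr0 hrt
  intro β
  have hfabs : |f23 lam r| = u^3 := by
    rw [hfu, abs_of_nonneg (by positivity : (0:ℝ) ≤ u^3)]
  have hfpow : |f23 lam r| ^ ((2:ℝ)/3) = u^2 := by rw [hfabs, cube_rpow_twothirds hu.le]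
  set v := |β| ^ ((1:ℝ)/3) with hvdef
  have hv0 : 0 ≤ v := Real.rpow_nonneg (abs_nonneg β) _
  have hv3 : v^3 = |β| := by
    rw [hvdef, ← Real.rpow_natCast (|β| ^ ((1:ℝ)/3)) 3, ← Real.rpow_mul (abs_nonneg β)]
    norm_num
  have hbpow : |β| ^ ((2:ℝ)/3) = v^2 := by
    rw [← hv3, cube_rpow_twothirds hv0]
  have hs : 0 ≤ v^4 + 2*u*v^3 + 3*u^2*v^2 + (4*u^3 - 2*r)*v + (2*u^4 - r*u) := by
    have h1 : 0 ≤ (4*u^3 - 2*r)*v := mul_nonneg (by linarith) hv0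
    have h2 : 0 ≤ 2*u^4 - r*u := by nlinarith [hu.le, h2u]
    have h3 : 0 ≤ 2*u*v^3 := by positivity
    have h4 : 0 ≤ 3*u^2*v^2 := by positivity
    have h5 : 0 ≤ v^4 := by positivity
    linarith
  have hdiff : (v^3 - r)^2 + lam*v^2 - ((u^3 - r)^2 + lam*u^2)
      = (v-u)^2 * (v^4 + 2*u*v^3 + 3*u^2*v^2 + (4*u^3 - 2*r)*v + (2*u^4 - r*u))
        + (v^2-u^2) * (3*u^4 - 3*r*u + lam) := by ring
  rw [hq, mul_zero, add_zero] at hdiff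
  have hmain : (u^3 - r)^2 + lam*u^2 ≤ (v^3 - r)^2 + lam*v^2 := by
    have := mul_nonneg (sq_nonneg (v-u))
      (hs : 0 ≤ v^4 + 2*u*v^3 + 3*u^2*v^2 + (4*u^3 - 2*r)*v + (2*u^4 - r*u))
    linarith
  have habs : (|β| - r)^2 ≤ (β - r)^2 := by
    have h1 : 0 ≤ r * (|β| - β) := mul_nonneg hr0.le (by linarith [le_abs_self β])
    nlinarith [sq_abs β]
  calc (f23 lam r - r) ^ 2 + lam * |f23 lam r| ^ ((2 : ℝ) / 3)
      = (u^3 - r)^2 + lam * u^2 := by rw [hfpow, hfu]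
    _ ≤ (v^3 - r)^2 + lam * v^2 := hmain
    _ = (|β| - r)^2 + lam * |β| ^ ((2:ℝ)/3) := by rw [hv3, hbpow]
    _ ≤ (β - r)^2 + lam * |β| ^ ((2:ℝ)/3) := by linarith

lemma f23_neg (lam r : ℝ) : f23 lam (-r) = - f23 lam r := by
  have hphi : phi23 lam (-r) = phi23 lam r := by
    have h2 : (-r)^2 = r^2 := by ring
    rw [phi23, phi23, h2]
  rw [f23, f23, hphi, abs_neg, Real.sign_neg]
  ring

theorem stmt_2 (lam r : ℝ) (hlam : 0 < lam) (hr : t23 lam < |r|) :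
    ∀ β : ℝ,
      (f23 lam r - r) ^ 2 + lam * |f23 lam r| ^ ((2 : ℝ) / 3) ≤
        (β - r) ^ 2 + lam * |β| ^ ((2 : ℝ) / 3) := by
  intro β
  rcases lt_trichotomy r 0 with hneg | hzero | hpos
  · have hr' : t23 lam < -r := by rwa [abs_of_neg hneg] at hr
    have h := min_pos lam (-r) hlam (by linarith) hr' (-β)
    have e0 : f23 lam r = - f23 lam (-r) := by
      have h' := f23_neg lam (-r)
      rw [neg_neg] at h'
      exact h'
    have e1 : (f23 lam (-r) - -r)^2 = (f23 lam r - r)^2 := by rw [e0]; ring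
    have e2 : |f23 lam (-r)| = |f23 lam r| := by rw [e0, abs_neg]
    have e3 : (-β - -r)^2 = (β - r)^2 := by ring
    have e4 : |-β| = |β| := abs_neg β
    rw [e1, e2, e3, e4] at h
    exact h
  · exfalso
    have ht0 : 0 < t23 lam := by
      rw [t23]
      have h1 : (0:ℝ) < (48 : ℝ) ^ ((1 : ℝ) / 4) := Real.rpow_pos_of_pos (by norm_num) _
      have h2 : (0:ℝ) < lam ^ ((3 : ℝ) / 4) := Real.rpow_pos_of_pos hlam _
      positivity
    rw [hzero, abs_zero] at hr
    linarith
  · have hr' : t23 lam < r := by rwa [abs_of_pos hpos] at hr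
    exact min_pos lam r hlam hpos hr' β
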